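/- The join operation on normalized cubical chains of the n-cube is anti-associative: for faces x, y, z of I^n (encoded as length-n strings in {0,1,I}), one has (x * y) * z = (−1)^{|x|+1} x * (y * z), where |x| is the number of I's in x. -/

import Mathlib

/-- The three possible entries of a face of the cube `Iⁿ`: `0`, `1`, or the free
coordinate `I`. -/
inductive CubeSym : Type
  | zero : CubeSym
  | one : CubeSym
  | seg : CubeSym
deriving DecidableEq

/-- Normalized cubical chains on the `n`-cube: the free abelian group on faces, a face
being encoded as a length-`n` string in `{0, 1, I}`. -/
abbrev CubeChains (n : ℕ) : Type := (Fin n → CubeSym) →₀ ℤ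

/-- The degree (dimension) of a face: the number of `I`'s. -/
def faceDeg {n : ℕ} (x : Fin n → CubeSym) : ℕ :=
  (Finset.univ.filter fun i => x i = CubeSym.seg).card

/-- The join on the `1`-cube: `0 * 1 = I`, `1 * 0 = −I`, all other joins of vertices `0`. -/
def joinCoeff : CubeSym → CubeSym → ℤ
  | CubeSym.zero, CubeSym.one => 1
  | CubeSym.one, CubeSym.zero => -1
  | _, _ => 0

/-- The face `x_{<i} I y_{>i}`. -/
def spliceFace {n : ℕ} (x y : Fin n → CubeSym) (i : Fin n) : Fin n → CubeSym :=
  fun j => if j < i then x j else if j = i then CubeSym.seg else y j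

/-- The join of two faces:
`(x_1…x_n) * (y_1…y_n) = (−1)^{|x|} ∑_i ε(y_{<i}) ε(x_{>i}) x_{<i} (x_i * y_i) y_{>i}`,
where `ε` is the augmentation (vanishing on strings containing `I`). -/
noncomputable def joinFace {n : ℕ} (x y : Fin n → CubeSym) : CubeChains n :=
  ∑ i : Fin n,
    if (∀ j : Fin n, j < i → y j ≠ CubeSym.seg) ∧ (∀ j : Fin n, i < j → x j ≠ CubeSym.seg) then
      ((-1 : ℤ) ^ faceDeg x * joinCoeff (x i) (y i)) • Finsupp.single (spliceFace x y i) (1 : ℤ)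
    else 0

/-- Bilinear extension of the join: join of a chain with a face. -/
noncomputable def joinCF {n : ℕ} (c : CubeChains n) (z : Fin n → CubeSym) : CubeChains n :=
  c.sum fun x a => a • joinFace x z

/-- Bilinear extension of the join: join of a face with a chain. -/
noncomputable def joinFC {n : ℕ} (x : Fin n → CubeSym) (c : CubeChains n) : CubeChains n :=
  c.sum fun y b => b • joinFace x y

/-!
Expanding both sides, `(x * y) * z` and `x * (y * z)` become double sums over pairs of
positions `(i, j)`, the term of `(i, j)` being supported on the face
`x_{<i} I y_{i<k<j} I z_{>j}`. If `j ≤ i`, both terms vanish: the inner join has already put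
an `I` at position `i` (resp. `j`), which the augmentation or the `1`-cube join kills.
If `i < j`, the faces coincide and the admissibility conditions match; the only difference is the
sign `(-1)^{|x * y|} = (-1)^{|x| + |y| + 1}` versus `(-1)^{|y|}`.
-/

namespace CubeSym

lemma joinCoeff_seg_left (b : CubeSym) : joinCoeff seg b = 0 := by
  cases b <;> rfl

lemma joinCoeff_seg_right (a : CubeSym) : joinCoeff a seg = 0 := by
  cases a <;> rfl

lemma ne_seg_of_joinCoeff_ne_zero {a b : CubeSym} (h : joinCoeff a b ≠ 0) :
    a ≠ seg ∧ b ≠ seg := by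
  cases a <;> cases b <;> simp_all [joinCoeff]

end CubeSym

open CubeSym Finsupp

section Faces

variable {n : ℕ}

lemma faceDeg_eq_sum (x : Fin n → CubeSym) :
    faceDeg x = ∑ k, if x k = seg then 1 else 0 :=
  Finset.card_filter _ _

lemma spliceFace_self (x y : Fin n → CubeSym) (i : Fin n) : spliceFace x y i i = seg := by
  simp [spliceFace]

lemma spliceFace_of_lt (x y : Fin n → CubeSym) {i j : Fin n} (h : j < i) :
    spliceFace x y i j = x j := by
  simp [spliceFace, h]

lemma spliceFace_of_gt (x y : Fin n → CubeSym) {i j : Fin n} (h : i < j) :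
    spliceFace x y i j = y j := by
  simp [spliceFace, h.not_gt, h.ne']

lemma spliceFace_spliceFace (x y z : Fin n → CubeSym) {i j : Fin n} (h : i < j) :
    spliceFace (spliceFace x y i) z j = spliceFace x (spliceFace y z j) i := by
  funext k
  rcases lt_trichotomy k i with hk | rfl | hk
  · simp [spliceFace, hk, hk.trans h]
  · simp [spliceFace, h]
  · simp [spliceFace, hk.not_gt, hk.ne']

lemma faceDeg_spliceFace {x y : Fin n → CubeSym} {i : Fin n}
    (hx : ∀ k, i ≤ k → x k ≠ seg) (hy : ∀ k, k ≤ i → y k ≠ seg) :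
    faceDeg (spliceFace x y i) = faceDeg x + faceDeg y + 1 := by
  have hpointwise : ∀ k, (if spliceFace x y i k = seg then 1 else 0) =
      (if x k = seg then 1 else 0) + (if y k = seg then 1 else 0) + (if k = i then 1 else 0) := by
    intro k
    rcases lt_trichotomy k i with hk | rfl | hk
    · simp [spliceFace_of_lt x y hk, hy k hk.le, hk.ne]
    · simp [spliceFace_self, hx k le_rfl, hy k le_rfl]
    · simp [spliceFace_of_gt x y hk, hx k hk.le, hk.ne']
  simp only [faceDeg_eq_sum, hpointwise, Finset.sum_add_distrib, Finset.sum_ite_eq',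
    Finset.mem_univ, if_true]

end Faces

section Join

variable {n : ℕ}

def joinTermCoeff (x y : Fin n → CubeSym) (i : Fin n) : ℤ :=
  if (∀ j : Fin n, j < i → y j ≠ seg) ∧ (∀ j : Fin n, i < j → x j ≠ seg) then
    (-1) ^ faceDeg x * joinCoeff (x i) (y i)
  else 0

lemma joinFace_eq_sum_single (x y : Fin n → CubeSym) :
    joinFace x y = ∑ i, single (spliceFace x y i) (joinTermCoeff x y i) := by
  refine Finset.sum_congr rfl fun i _ => ?_
  unfold joinTermCoeff
  split_ifs <;> simp [smul_single]

lemma joinCF_eq_linearCombination (c : CubeChains n) (z : Fin n → CubeSym) :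
    joinCF c z = linearCombination ℤ (joinFace · z) c :=
  (linearCombination_apply _ _).symm

lemma joinFC_eq_linearCombination (x : Fin n → CubeSym) (c : CubeChains n) :
    joinFC x c = linearCombination ℤ (joinFace x) c :=
  (linearCombination_apply _ _).symm

lemma joinCF_joinFace (x y z : Fin n → CubeSym) :
    joinCF (joinFace x y) z = ∑ i, ∑ j, single (spliceFace (spliceFace x y i) z j)
      (joinTermCoeff x y i * joinTermCoeff (spliceFace x y i) z j) := by
  simp [joinCF_eq_linearCombination, joinFace_eq_sum_single x y, joinFace_eq_sum_single _ z,
    Finset.smul_sum, smul_single]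

lemma joinFC_joinFace (x y z : Fin n → CubeSym) :
    joinFC x (joinFace y z) = ∑ j, ∑ i, single (spliceFace x (spliceFace y z j) i)
      (joinTermCoeff y z j * joinTermCoeff x (spliceFace y z j) i) := by
  simp [joinFC_eq_linearCombination, joinFace_eq_sum_single y z, joinFace_eq_sum_single x,
    Finset.smul_sum, smul_single]

lemma faceDeg_spliceFace_of_joinTermCoeff_ne_zero {x y : Fin n → CubeSym} {i : Fin n}
    (h : joinTermCoeff x y i ≠ 0) : faceDeg (spliceFace x y i) = faceDeg x + faceDeg y + 1 := by
  obtain ⟨hadm, h⟩ := ite_ne_right_iff.mp h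
  obtain ⟨hxi, hyi⟩ := ne_seg_of_joinCoeff_ne_zero (right_ne_zero_of_mul h)
  exact faceDeg_spliceFace (fun k hk => hk.lt_or_eq.elim (hadm.2 k) (· ▸ hxi))
    (fun k hk => hk.lt_or_eq.elim (hadm.1 k) (· ▸ hyi))

lemma joinTermCoeff_spliceFace_left_of_le (x y z : Fin n → CubeSym) {i j : Fin n} (h : j ≤ i) :
    joinTermCoeff (spliceFace x y i) z j = 0 := by
  unfold joinTermCoeff
  rcases h.lt_or_eq with h | rfl
  · rw [if_neg]
    rintro ⟨-, hadm⟩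
    exact hadm i h (spliceFace_self x y i)
  · simp [spliceFace_self, joinCoeff_seg_left]

lemma joinTermCoeff_spliceFace_right_of_le (x y z : Fin n → CubeSym) {i j : Fin n} (h : j ≤ i) :
    joinTermCoeff x (spliceFace y z j) i = 0 := by
  unfold joinTermCoeff
  rcases h.lt_or_eq with h | rfl
  · rw [if_neg]
    rintro ⟨hadm, -⟩
    exact hadm j h (spliceFace_self y z j)
  · simp [spliceFace_self, joinCoeff_seg_right]

lemma joinTermCoeff_spliceFace_left_of_lt {x y : Fin n → CubeSym} (z : Fin n → CubeSym)
    {i j : Fin n} (h : i < j) (hxy : joinTermCoeff x y i ≠ 0) :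
    joinTermCoeff (spliceFace x y i) z j = (-1) ^ (faceDeg x + 1) * joinTermCoeff y z j := by
  have hsplice : ∀ k, j < k → spliceFace x y i k = y k :=
    fun k hk => spliceFace_of_gt x y (h.trans hk)
  unfold joinTermCoeff
  simp +contextual only [hsplice, spliceFace_of_gt x y h,
    faceDeg_spliceFace_of_joinTermCoeff_ne_zero hxy]
  split_ifs <;> ring

lemma joinTermCoeff_spliceFace_right_of_lt (x : Fin n → CubeSym) {y z : Fin n → CubeSym}
    {i j : Fin n} (h : i < j) : joinTermCoeff x (spliceFace y z j) i = joinTermCoeff x y i := by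
  have hsplice : ∀ k, k < i → spliceFace y z j k = y k :=
    fun k hk => spliceFace_of_lt y z (hk.trans h)
  unfold joinTermCoeff
  simp +contextual only [hsplice, spliceFace_of_lt y z h]

lemma single_joinTermCoeff_assoc (x y z : Fin n → CubeSym) (i j : Fin n) :
    single (spliceFace (spliceFace x y i) z j)
        (joinTermCoeff x y i * joinTermCoeff (spliceFace x y i) z j) =
      (-1 : ℤ) ^ (faceDeg x + 1) • single (spliceFace x (spliceFace y z j) i)
        (joinTermCoeff y z j * joinTermCoeff x (spliceFace y z j) i) := by
  rcases lt_or_ge i j with h | h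
  · rw [spliceFace_spliceFace x y z h, joinTermCoeff_spliceFace_right_of_lt x h, smul_single,
      smul_eq_mul]
    by_cases hxy : joinTermCoeff x y i = 0
    · simp [hxy]
    · rw [joinTermCoeff_spliceFace_left_of_lt z h hxy]
      congr 1
      ring
  · simp [joinTermCoeff_spliceFace_left_of_le x y z h, joinTermCoeff_spliceFace_right_of_le x y z h]

end Join

/-- The join operation on normalized cubical chains of the `n`-cube is
anti-associative: `(x * y) * z = (−1)^{|x|+1} x * (y * z)` for all faces `x, y, z`. -/
theorem join_antiassoc {n : ℕ} (x y z : Fin n → CubeSym) :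
    joinCF (joinFace x y) z = ((-1 : ℤ) ^ (faceDeg x + 1)) • joinFC x (joinFace y z) := by
  rw [joinCF_joinFace, joinFC_joinFace, Finset.sum_comm, Finset.smul_sum]
  refine Finset.sum_congr rfl fun j _ => ?_
  rw [Finset.smul_sum]
  exact Finset.sum_congr rfl fun i _ => single_joinTermCoeff_assoc x y z i j
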